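/- Let β ∈ ℝ and let u : ℝ → ℝ be four times continuously differentiable with u''''(x) + β² u''(x) + e^{u(x)} − 1 = 0 for all x ∈ ℝ, and suppose u(x), u′(x), u″(x), u‴(x) all tend to 0 as x → −∞. Let a < b and c ∈ ℝ with u(a) = u(b) = c. Then ∫_{a}^{b} (u″)² dx + β² ∫_{a}^{b} (u′)² dx = 2 ∫_{a}^{b} (e^{u(x)} − 1)(u(x) − c) dx + 2 ∫_{a}^{b} (e^{u(x)} − u(x) − 1) dx. -/

import Mathlib

open MeasureTheory Real Filter

/-!
The quantity `P = u'u''' - (u'')²/2 + (β²/2)(u')² + e^u - u - 1` is a first integral of the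
equation: `P' = u'(u'''' + β²u'' + e^u - 1) = 0`, and the decay at `-∞` forces `P ≡ 0`.
Integrating `((u''' + β²u')(u - c))'` over `[a, b]` gives `0` since `u(a) = u(b) = c`;
expanding this derivative with the equation and `P = 0` yields exactly half the difference
of the two sides of the identity.
-/

theorem ContDiff.hasDerivAt_iteratedDeriv {𝕜 F : Type*} [NontriviallyNormedField 𝕜]
    [NormedAddCommGroup F] [NormedSpace 𝕜 F] {u : 𝕜 → F} {n : ℕ} (hu : ContDiff 𝕜 n u)
    {k : ℕ} (hk : k < n) (x : 𝕜) :
    HasDerivAt (iteratedDeriv k u) (iteratedDeriv (k + 1) u x) x := by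
  rw [iteratedDeriv_succ]
  exact (hu.differentiable_iteratedDeriv k (mod_cast hk) x).hasDerivAt

theorem ContDiff.hasDerivAt_deriv {𝕜 F : Type*} [NontriviallyNormedField 𝕜]
    [NormedAddCommGroup F] [NormedSpace 𝕜 F] {u : 𝕜 → F} {n : ℕ} (hu : ContDiff 𝕜 n u)
    (hn : 1 < n) (x : 𝕜) : HasDerivAt (deriv u) (iteratedDeriv 2 u x) x := by
  simpa only [iteratedDeriv_one] using hu.hasDerivAt_iteratedDeriv hn x

theorem eq_zero_of_hasDerivAt_zero_of_tendsto_atBot {F : Type*} [NormedAddCommGroup F]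
    [NormedSpace ℝ F] {P : ℝ → F} (hP : ∀ x, HasDerivAt P 0 x)
    (hlim : Tendsto P atBot (nhds 0)) (x : ℝ) : P x = 0 := by
  have hconst : P = fun _ => P x :=
    funext fun y => is_const_of_deriv_eq_zero (fun z => (hP z).differentiableAt)
      (fun z => (hP z).deriv) y x
  rw [hconst] at hlim
  exact tendsto_nhds_unique tendsto_const_nhds hlim

noncomputable def pohozaev (β : ℝ) (u : ℝ → ℝ) (x : ℝ) : ℝ :=
  deriv u x * iteratedDeriv 3 u x - iteratedDeriv 2 u x ^ 2 / 2 + β ^ 2 / 2 * deriv u x ^ 2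
    + exp (u x) - u x - 1

noncomputable def flux (β c : ℝ) (u : ℝ → ℝ) (x : ℝ) : ℝ :=
  (iteratedDeriv 3 u x + β ^ 2 * deriv u x) * (u x - c)

section TravelingWave

variable {β : ℝ} {u : ℝ → ℝ}

theorem hasDerivAt_pohozaev (hu : ContDiff ℝ 4 u)
    (heq : ∀ x, iteratedDeriv 4 u x + β ^ 2 * iteratedDeriv 2 u x + exp (u x) - 1 = 0)
    (x : ℝ) : HasDerivAt (pohozaev β u) 0 x := by
  have H0 := (hu.differentiable (by norm_num) x).hasDerivAt
  have H1 := hu.hasDerivAt_deriv (by norm_num) x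
  have H2 := hu.hasDerivAt_iteratedDeriv (k := 2) (by norm_num) x
  have H3 := hu.hasDerivAt_iteratedDeriv (k := 3) (by norm_num) x
  refine ((((((H1.mul H3).sub ((H2.pow 2).div_const 2)).add
    ((H1.pow 2).const_mul (β ^ 2 / 2))).add H0.exp).sub H0).sub_const 1).congr_deriv ?_
  push_cast
  linear_combination deriv u x * heq x

theorem tendsto_pohozaev_atBot (hb0 : Tendsto u atBot (nhds 0))
    (hb1 : Tendsto (deriv u) atBot (nhds 0)) (hb2 : Tendsto (iteratedDeriv 2 u) atBot (nhds 0))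
    (hb3 : Tendsto (iteratedDeriv 3 u) atBot (nhds 0)) :
    Tendsto (pohozaev β u) atBot (nhds 0) := by
  have := (((((hb1.mul hb3).sub ((hb2.pow 2).div_const 2)).add
    ((hb1.pow 2).const_mul (β ^ 2 / 2))).add ((continuous_exp.tendsto 0).comp hb0)).sub hb0).sub
    (tendsto_const_nhds (x := (1 : ℝ)))
  convert this using 2
  · rfl
  · norm_num

theorem hasDerivAt_flux (hu : ContDiff ℝ 4 u)
    (heq : ∀ x, iteratedDeriv 4 u x + β ^ 2 * iteratedDeriv 2 u x + exp (u x) - 1 = 0)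
    (hP : ∀ x, pohozaev β u x = 0) (c x : ℝ) :
    HasDerivAt (flux β c u)
      ((iteratedDeriv 2 u x ^ 2 + β ^ 2 * deriv u x ^ 2 - 2 * ((exp (u x) - 1) * (u x - c))
        - 2 * (exp (u x) - u x - 1)) / 2) x := by
  have H0 := (hu.differentiable (by norm_num) x).hasDerivAt
  have H1 := hu.hasDerivAt_deriv (by norm_num) x
  have H3 := hu.hasDerivAt_iteratedDeriv (k := 3) (by norm_num) x
  refine ((H3.add (H1.const_mul (β ^ 2))).mul (H0.sub_const c)).congr_deriv ?_
  have hPx := hP x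
  rw [pohozaev] at hPx
  simp only [Pi.add_apply]
  linear_combination (u x - c) * heq x + hPx

end TravelingWave

theorem stmt16_general (β : ℝ) (u : ℝ → ℝ) (hu : ContDiff ℝ 4 u)
    (heq : ∀ x : ℝ, iteratedDeriv 4 u x + β ^ 2 * iteratedDeriv 2 u x
        + Real.exp (u x) - 1 = 0)
    (hb0 : Tendsto u atBot (nhds 0))
    (hb1 : Tendsto (deriv u) atBot (nhds 0))
    (hb2 : Tendsto (iteratedDeriv 2 u) atBot (nhds 0))
    (hb3 : Tendsto (iteratedDeriv 3 u) atBot (nhds 0))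
    (a b c : ℝ) (hua : u a = c) (hub : u b = c) :
    (∫ x in a..b, (iteratedDeriv 2 u x) ^ 2) + β ^ 2 * (∫ x in a..b, (deriv u x) ^ 2)
      = 2 * (∫ x in a..b, (Real.exp (u x) - 1) * (u x - c))
        + 2 * (∫ x in a..b, (Real.exp (u x) - u x - 1)) := by
  have hP := eq_zero_of_hasDerivAt_zero_of_tendsto_atBot (hasDerivAt_pohozaev hu heq)
    (tendsto_pohozaev_atBot hb0 hb1 hb2 hb3)
  have hc0 : Continuous u := hu.continuous
  have hc1 : Continuous (deriv u) := by
    simpa only [iteratedDeriv_one] using hu.continuous_iteratedDeriv 1 (by norm_num)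
  have hc2 : Continuous (iteratedDeriv 2 u) := hu.continuous_iteratedDeriv 2 (by norm_num)
  have hflux := intervalIntegral.integral_eq_sub_of_hasDerivAt
    (a := a) (b := b) (fun x _ => hasDerivAt_flux hu heq hP c x)
    (Continuous.intervalIntegrable (by fun_prop) _ _)
  simp only [flux, hua, hub, sub_self, mul_zero] at hflux
  rw [intervalIntegral.integral_div, intervalIntegral.integral_sub, intervalIntegral.integral_sub,
    intervalIntegral.integral_add, intervalIntegral.integral_const_mul,
    intervalIntegral.integral_const_mul, intervalIntegral.integral_const_mul] at hflux
  · linarith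
  all_goals exact Continuous.intervalIntegrable (by fun_prop) _ _

/-- Energy identity on an interval with equal boundary values: if
`u'''' + β²u'' + e^u - 1 = 0` on `ℝ` with `u, u', u'', u''' → 0` at `-∞`, and
`u(a) = u(b) = c` with `a < b`, then
`∫_a^b(u'')² + β²∫_a^b(u')² = 2∫_a^b(e^u - 1)(u - c) + 2∫_a^b(e^u - u - 1)`. -/
theorem stmt16 (β : ℝ) (u : ℝ → ℝ) (hu : ContDiff ℝ 4 u)
    (heq : ∀ x : ℝ, iteratedDeriv 4 u x + β ^ 2 * iteratedDeriv 2 u x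
        + Real.exp (u x) - 1 = 0)
    (hb0 : Tendsto u atBot (nhds 0))
    (hb1 : Tendsto (deriv u) atBot (nhds 0))
    (hb2 : Tendsto (iteratedDeriv 2 u) atBot (nhds 0))
    (hb3 : Tendsto (iteratedDeriv 3 u) atBot (nhds 0))
    (a b c : ℝ) (hab : a < b) (hua : u a = c) (hub : u b = c) :
    (∫ x in a..b, (iteratedDeriv 2 u x) ^ 2) + β ^ 2 * (∫ x in a..b, (deriv u x) ^ 2)
      = 2 * (∫ x in a..b, (Real.exp (u x) - 1) * (u x - c))
        + 2 * (∫ x in a..b, (Real.exp (u x) - u x - 1)) :=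
  stmt16_general β u hu heq hb0 hb1 hb2 hb3 a b c hua hub
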